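/- arXiv:2306.04603 — 4 statements merged into one kernel-verified Lean document; each statement's English description precedes it below -/
import Mathlib

section
/- Let S be a semigroup and define the Conrad relation ρ on S by a ρ b if and only if a·s·a = a·s·b and a·s·b = b·s·a for all s ∈ S. Then ρ is a partial order (reflexive, antisymmetric, and transitive) if and only if S is weakly separative. -/
set_option maxHeartbeats 2000000 in
/-- The Conrad relation on a semigroup is a partial order iff the semigroup
is weakly separative. -/
theorem conrad_partialOrder_iff_weakly_separative {S : Type*} [Semigroup S] :
    (Reflexive (fun a b : S => ∀ s : S, a * s * a = a * s * b ∧ a * s * b = b * s * a) ∧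
     AntiSymmetric (fun a b : S => ∀ s : S, a * s * a = a * s * b ∧ a * s * b = b * s * a) ∧
     Transitive (fun a b : S => ∀ s : S, a * s * a = a * s * b ∧ a * s * b = b * s * a)) ↔
    (∀ a b : S, (∀ s : S, a * s * a = a * s * b ∧ a * s * b = b * s * a ∧
      b * s * a = b * s * b) → a = b) := by
  constructor
  · rintro ⟨-, ha, -⟩ a b h
    exact ha (fun s => ⟨(h s).1, (h s).2.1⟩) (fun s => ⟨(h s).2.2.symm, (h s).2.1.symm⟩)
  · intro hw
    refine ⟨fun a s => ⟨rfl, rfl⟩, fun a b hab hba => ?_, fun a b c hab hbc => ?_⟩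
    · exact hw a b (fun s => ⟨(hab s).1, (hab s).2, (hba s).1.symm⟩)
    · intro s
      have A1 : ∀ x : S, a * x * a = a * x * b := fun x => (hab x).1
      have A3 : ∀ x : S, a * x * b = b * x * a := fun x => (hab x).2
      have A2 : ∀ x : S, a * x * a = b * x * a := fun x => (A1 x).trans (A3 x)
      have B1 : ∀ x : S, b * x * b = b * x * c := fun x => (hbc x).1
      have B3 : ∀ x : S, b * x * c = c * x * b := fun x => (hbc x).2
      have B2 : ∀ x : S, b * x * b = c * x * b := fun x => (B1 x).trans (B3 x)
      have h1 : a * s * a = a * s * c := by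
        apply hw
        intro t
        have E1 : ((((((a * s) * a) * t) * a) * s) * a) = ((((((a * s) * a) * t) * a) * s) * c) := by
          calc ((((((a * s) * a) * t) * a) * s) * a)
            _ = ((((((a * s) * a) * t) * a) * s) * a) := by simp only [mul_assoc]
            _ = ((((((a * s) * b) * t) * a) * s) * a) := congrArg (fun z => z * a) (congrArg (fun z => z * s) (congrArg (fun z => z * a) (congrArg (fun z => z * t) ((A1 s)))))
            _ = ((((((a * s) * b) * t) * a) * s) * a) := by simp only [mul_assoc]
            _ = ((a * ((((s * b) * t) * a) * s)) * a) := by simp only [mul_assoc]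
            _ = ((a * ((((s * b) * t) * a) * s)) * b) := (A1 ((((s * b) * t) * a) * s))
            _ = ((((((a * s) * b) * t) * a) * s) * b) := by simp only [mul_assoc]
            _ = ((a * s) * ((b * ((t * a) * s)) * b)) := by simp only [mul_assoc]
            _ = ((a * s) * ((b * ((t * a) * s)) * c)) := congrArg (fun z => (a * s) * z) ((B1 ((t * a) * s)))
            _ = ((((((a * s) * b) * t) * a) * s) * c) := by simp only [mul_assoc]
            _ = ((((((a * s) * b) * t) * a) * s) * c) := by simp only [mul_assoc]
            _ = ((((((a * s) * a) * t) * a) * s) * c) := congrArg (fun z => z * c) (congrArg (fun z => z * s) (congrArg (fun z => z * a) (congrArg (fun z => z * t) ((A1 s).symm))))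
            _ = ((((((a * s) * a) * t) * a) * s) * c) := by simp only [mul_assoc]
        have E2 : ((((((a * s) * a) * t) * a) * s) * c) = ((((((a * s) * c) * t) * a) * s) * a) := by
          calc ((((((a * s) * a) * t) * a) * s) * c)
            _ = ((((((a * s) * a) * t) * a) * s) * c) := by simp only [mul_assoc]
            _ = ((((((a * s) * b) * t) * a) * s) * c) := congrArg (fun z => z * c) (congrArg (fun z => z * s) (congrArg (fun z => z * a) (congrArg (fun z => z * t) ((A1 s)))))
            _ = ((((((a * s) * b) * t) * a) * s) * c) := by simp only [mul_assoc]
            _ = ((a * s) * ((b * ((t * a) * s)) * c)) := by simp only [mul_assoc]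
            _ = ((a * s) * ((c * ((t * a) * s)) * b)) := congrArg (fun z => (a * s) * z) ((B3 ((t * a) * s)))
            _ = ((((((a * s) * c) * t) * a) * s) * b) := by simp only [mul_assoc]
            _ = ((a * ((((s * c) * t) * a) * s)) * b) := by simp only [mul_assoc]
            _ = ((a * ((((s * c) * t) * a) * s)) * a) := (A1 ((((s * c) * t) * a) * s)).symm
            _ = ((((((a * s) * c) * t) * a) * s) * a) := by simp only [mul_assoc]
        have E3 : ((((((a * s) * c) * t) * a) * s) * a) = ((((((a * s) * c) * t) * a) * s) * c) := by
          calc ((((((a * s) * c) * t) * a) * s) * a)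
            _ = ((((a * ((s * c) * t)) * a) * s) * a) := by simp only [mul_assoc]
            _ = ((((a * ((s * c) * t)) * b) * s) * a) := congrArg (fun z => z * a) (congrArg (fun z => z * s) ((A1 ((s * c) * t))))
            _ = ((((((a * s) * c) * t) * b) * s) * a) := by simp only [mul_assoc]
            _ = ((a * ((((s * c) * t) * b) * s)) * a) := by simp only [mul_assoc]
            _ = ((a * ((((s * c) * t) * b) * s)) * b) := (A1 ((((s * c) * t) * b) * s))
            _ = ((((((a * s) * c) * t) * b) * s) * b) := by simp only [mul_assoc]
            _ = ((((a * s) * c) * t) * ((b * s) * b)) := by simp only [mul_assoc]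
            _ = ((((a * s) * c) * t) * ((b * s) * c)) := congrArg (fun z => (((a * s) * c) * t) * z) ((B1 s))
            _ = ((((((a * s) * c) * t) * b) * s) * c) := by simp only [mul_assoc]
            _ = ((((a * ((s * c) * t)) * b) * s) * c) := by simp only [mul_assoc]
            _ = ((((a * ((s * c) * t)) * a) * s) * c) := congrArg (fun z => z * c) (congrArg (fun z => z * s) ((A1 ((s * c) * t)).symm))
            _ = ((((((a * s) * c) * t) * a) * s) * c) := by simp only [mul_assoc]
        exact ⟨by simpa only [mul_assoc] using E1, by simpa only [mul_assoc] using E2,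
          by simpa only [mul_assoc] using E3⟩
      have h2 : a * s * c = c * s * a := by
        apply hw
        intro t
        have E4 : ((((((a * s) * c) * t) * a) * s) * c) = ((((((a * s) * c) * t) * c) * s) * a) := by
          calc ((((((a * s) * c) * t) * a) * s) * c)
            _ = ((((a * ((s * c) * t)) * a) * s) * c) := by simp only [mul_assoc]
            _ = ((((a * ((s * c) * t)) * b) * s) * c) := congrArg (fun z => z * c) (congrArg (fun z => z * s) ((A1 ((s * c) * t))))
            _ = ((((((a * s) * c) * t) * b) * s) * c) := by simp only [mul_assoc]
            _ = ((((a * s) * c) * t) * ((b * s) * c)) := by simp only [mul_assoc]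
            _ = ((((a * s) * c) * t) * ((c * s) * b)) := congrArg (fun z => (((a * s) * c) * t) * z) ((B3 s))
            _ = ((((((a * s) * c) * t) * c) * s) * b) := by simp only [mul_assoc]
            _ = ((a * ((((s * c) * t) * c) * s)) * b) := by simp only [mul_assoc]
            _ = ((a * ((((s * c) * t) * c) * s)) * a) := (A1 ((((s * c) * t) * c) * s)).symm
            _ = ((((((a * s) * c) * t) * c) * s) * a) := by simp only [mul_assoc]
        have E5 : ((((((a * s) * c) * t) * c) * s) * a) = ((((((c * s) * a) * t) * a) * s) * c) := by
          calc ((((((a * s) * c) * t) * c) * s) * a)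
            _ = ((a * ((((s * c) * t) * c) * s)) * a) := by simp only [mul_assoc]
            _ = ((a * ((((s * c) * t) * c) * s)) * b) := (A1 ((((s * c) * t) * c) * s))
            _ = ((((((a * s) * c) * t) * c) * s) * b) := by simp only [mul_assoc]
            _ = ((a * s) * ((c * ((t * c) * s)) * b)) := by simp only [mul_assoc]
            _ = ((a * s) * ((b * ((t * c) * s)) * c)) := congrArg (fun z => (a * s) * z) ((B3 ((t * c) * s)).symm)
            _ = ((((((a * s) * b) * t) * c) * s) * c) := by simp only [mul_assoc]
            _ = ((((((a * s) * b) * t) * c) * s) * c) := by simp only [mul_assoc]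
            _ = ((((((b * s) * a) * t) * c) * s) * c) := congrArg (fun z => z * c) (congrArg (fun z => z * s) (congrArg (fun z => z * c) (congrArg (fun z => z * t) ((A3 s)))))
            _ = ((((((b * s) * a) * t) * c) * s) * c) := by simp only [mul_assoc]
            _ = ((((b * ((s * a) * t)) * c) * s) * c) := by simp only [mul_assoc]
            _ = ((((c * ((s * a) * t)) * b) * s) * c) := congrArg (fun z => z * c) (congrArg (fun z => z * s) ((B3 ((s * a) * t))))
            _ = ((((((c * s) * a) * t) * b) * s) * c) := by simp only [mul_assoc]
            _ = ((((c * s) * ((a * t) * b)) * s) * c) := by simp only [mul_assoc]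
            _ = ((((c * s) * ((a * t) * a)) * s) * c) := congrArg (fun z => z * c) (congrArg (fun z => z * s) (congrArg (fun z => (c * s) * z) ((A1 t).symm)))
            _ = ((((((c * s) * a) * t) * a) * s) * c) := by simp only [mul_assoc]
        have E6 : ((((((c * s) * a) * t) * a) * s) * c) = ((((((c * s) * a) * t) * c) * s) * a) := by
          calc ((((((c * s) * a) * t) * a) * s) * c)
            _ = ((((c * s) * ((a * t) * a)) * s) * c) := by simp only [mul_assoc]
            _ = ((((c * s) * ((a * t) * b)) * s) * c) := congrArg (fun z => z * c) (congrArg (fun z => z * s) (congrArg (fun z => (c * s) * z) ((A1 t))))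
            _ = ((((((c * s) * a) * t) * b) * s) * c) := by simp only [mul_assoc]
            _ = ((((c * s) * a) * t) * ((b * s) * c)) := by simp only [mul_assoc]
            _ = ((((c * s) * a) * t) * ((c * s) * b)) := congrArg (fun z => (((c * s) * a) * t) * z) ((B3 s))
            _ = ((((((c * s) * a) * t) * c) * s) * b) := by simp only [mul_assoc]
            _ = ((c * s) * ((a * ((t * c) * s)) * b)) := by simp only [mul_assoc]
            _ = ((c * s) * ((a * ((t * c) * s)) * a)) := congrArg (fun z => (c * s) * z) ((A1 ((t * c) * s)).symm)
            _ = ((((((c * s) * a) * t) * c) * s) * a) := by simp only [mul_assoc]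
        exact ⟨by simpa only [mul_assoc] using E4, by simpa only [mul_assoc] using E5,
          by simpa only [mul_assoc] using E6⟩
      exact ⟨h1, h2⟩
end

section
/- In a weakly separative semigroup S, the Conrad relation is transitive: if a ρ b and b ρ c, then a ρ c, where a ρ b means a·s·a = a·s·b = b·s·a for all s ∈ S. -/
set_option maxHeartbeats 2000000 in
/-- In a weakly separative semigroup, the Conrad relation is transitive. -/
theorem conrad_transitive_of_weakly_separative {S : Type*} [Semigroup S]
    (hws : ∀ a b : S, (∀ s : S, a * s * a = a * s * b ∧ a * s * b = b * s * a ∧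
      b * s * a = b * s * b) → a = b)
    (a b c : S)
    (hab : ∀ s : S, a * s * a = a * s * b ∧ a * s * b = b * s * a)
    (hbc : ∀ s : S, b * s * b = b * s * c ∧ b * s * c = c * s * b) :
    ∀ s : S, a * s * a = a * s * c ∧ a * s * c = c * s * a := by
  have A1 : ∀ u : S, a*u*a = a*u*b := fun u => (hab u).1
  have A2 : ∀ u : S, a*u*b = b*u*a := fun u => (hab u).2
  have AB : ∀ u : S, a*u*a = b*u*a := fun u => (A1 u).trans (A2 u)
  have B1 : ∀ u : S, b*u*b = b*u*c := fun u => (hbc u).1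
  have B2 : ∀ u : S, b*u*c = c*u*b := fun u => (hbc u).2
  have BC : ∀ u : S, b*u*b = c*u*b := fun u => (B1 u).trans (B2 u)
  have key : ∀ s : S, a*s*a = a*s*c := by
    intro s
    apply hws (a*s*a) (a*s*c)
    intro t
    have e1 : a*s*a*t*(a*s*c) = a*s*a*t*(a*s*a) := by
      calc a*s*a*t*(a*s*c) = a*s*a*t*a*s*c := by simp only [mul_assoc]
        _ = a*(s*a*t)*a*(s*c) := by simp only [mul_assoc]
        _ = a*(s*a*t)*b*(s*c) := by rw [A1 (s*a*t)]
        _ = a*s*a*t*b*s*c := by simp only [mul_assoc]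
        _ = a*s*a*t*(b*s*c) := by simp only [mul_assoc]
        _ = a*s*a*t*(b*s*b) := by rw [(B1 s).symm]
        _ = a*s*a*t*b*s*b := by simp only [mul_assoc]
        _ = a*s*(a*(t*b*s)*b) := by simp only [mul_assoc]
        _ = a*s*(a*(t*b*s)*a) := by rw [(A1 (t*b*s)).symm]
        _ = a*s*a*t*b*s*a := by simp only [mul_assoc]
        _ = a*s*a*t*(b*s*a) := by simp only [mul_assoc]
        _ = a*s*a*t*(a*s*a) := by rw [(AB s).symm]
        _ = a*s*a*t*a*s*a := by simp only [mul_assoc]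
        _ = a*s*a*t*(a*s*a) := by simp only [mul_assoc]
    have e2 : a*s*c*t*(a*s*a) = a*s*a*t*(a*s*a) := by
      calc a*s*c*t*(a*s*a) = a*s*c*t*a*s*a := by simp only [mul_assoc]
        _ = a*(s*c*t*a*s)*a := by simp only [mul_assoc]
        _ = b*(s*c*t*a*s)*a := by rw [AB (s*c*t*a*s)]
        _ = b*s*c*t*a*s*a := by simp only [mul_assoc]
        _ = b*s*c*(t*a*s*a) := by simp only [mul_assoc]
        _ = b*s*b*(t*a*s*a) := by rw [(B1 s).symm]
        _ = b*s*b*t*a*s*a := by simp only [mul_assoc]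
        _ = b*(s*b*t)*a*(s*a) := by simp only [mul_assoc]
        _ = a*(s*b*t)*a*(s*a) := by rw [(AB (s*b*t)).symm]
        _ = a*s*b*t*a*s*a := by simp only [mul_assoc]
        _ = a*s*b*(t*a*s*a) := by simp only [mul_assoc]
        _ = a*s*a*(t*a*s*a) := by rw [(A1 s).symm]
        _ = a*s*a*t*a*s*a := by simp only [mul_assoc]
        _ = a*s*a*t*(a*s*a) := by simp only [mul_assoc]
    have e3 : a*s*c*t*(a*s*c) = a*s*a*t*(a*s*a) := by
      calc a*s*c*t*(a*s*c) = a*s*c*t*a*s*c := by simp only [mul_assoc]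
        _ = a*(s*c*t)*a*(s*c) := by simp only [mul_assoc]
        _ = a*(s*c*t)*b*(s*c) := by rw [A1 (s*c*t)]
        _ = a*s*c*t*b*s*c := by simp only [mul_assoc]
        _ = a*s*c*t*(b*s*c) := by simp only [mul_assoc]
        _ = a*s*c*t*(b*s*b) := by rw [(B1 s).symm]
        _ = a*s*c*t*b*s*b := by simp only [mul_assoc]
        _ = a*s*(c*(t*b*s)*b) := by simp only [mul_assoc]
        _ = a*s*(b*(t*b*s)*b) := by rw [(BC (t*b*s)).symm]
        _ = a*s*b*t*b*s*b := by simp only [mul_assoc]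
        _ = a*(s*b*t)*b*(s*b) := by simp only [mul_assoc]
        _ = a*(s*b*t)*a*(s*b) := by rw [(A1 (s*b*t)).symm]
        _ = a*s*b*t*a*s*b := by simp only [mul_assoc]
        _ = a*s*b*(t*a*s*b) := by simp only [mul_assoc]
        _ = a*s*a*(t*a*s*b) := by rw [(A1 s).symm]
        _ = a*s*a*t*a*s*b := by simp only [mul_assoc]
        _ = a*s*a*t*(a*s*b) := by simp only [mul_assoc]
        _ = a*s*a*t*(a*s*a) := by rw [(A1 s).symm]
        _ = a*s*a*t*a*s*a := by simp only [mul_assoc]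
        _ = a*s*a*t*(a*s*a) := by simp only [mul_assoc]
    exact ⟨e1.symm, e1.trans e2.symm, e2.trans e3.symm⟩
  have key2 : ∀ s : S, a*s*a = c*s*a := by
    intro s
    apply hws (a*s*a) (c*s*a)
    intro t
    have f1 : a*s*a*t*(c*s*a) = a*s*a*t*(a*s*a) := by
      calc a*s*a*t*(c*s*a) = a*s*a*t*c*s*a := by simp only [mul_assoc]
        _ = a*s*(a*(t*c*s)*a) := by simp only [mul_assoc]
        _ = a*s*(a*(t*c*s)*b) := by rw [A1 (t*c*s)]
        _ = a*s*a*t*c*s*b := by simp only [mul_assoc]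
        _ = a*s*a*t*(c*s*b) := by simp only [mul_assoc]
        _ = a*s*a*t*(b*s*b) := by rw [(BC s).symm]
        _ = a*s*a*t*b*s*b := by simp only [mul_assoc]
        _ = a*s*(a*(t*b*s)*b) := by simp only [mul_assoc]
        _ = a*s*(a*(t*b*s)*a) := by rw [(A1 (t*b*s)).symm]
        _ = a*s*a*t*b*s*a := by simp only [mul_assoc]
        _ = a*s*a*t*(b*s*a) := by simp only [mul_assoc]
        _ = a*s*a*t*(a*s*a) := by rw [(AB s).symm]
        _ = a*s*a*t*a*s*a := by simp only [mul_assoc]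
        _ = a*s*a*t*(a*s*a) := by simp only [mul_assoc]
    have f2 : c*s*a*t*(a*s*a) = a*s*a*t*(a*s*a) := by
      calc c*s*a*t*(a*s*a) = c*s*a*t*a*s*a := by simp only [mul_assoc]
        _ = c*s*(a*(t*a*s)*a) := by simp only [mul_assoc]
        _ = c*s*(b*(t*a*s)*a) := by rw [AB (t*a*s)]
        _ = c*s*b*t*a*s*a := by simp only [mul_assoc]
        _ = c*s*b*(t*a*s*a) := by simp only [mul_assoc]
        _ = b*s*b*(t*a*s*a) := by rw [(BC s).symm]
        _ = b*s*b*t*a*s*a := by simp only [mul_assoc]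
        _ = b*(s*b*t)*a*(s*a) := by simp only [mul_assoc]
        _ = a*(s*b*t)*a*(s*a) := by rw [(AB (s*b*t)).symm]
        _ = a*s*b*t*a*s*a := by simp only [mul_assoc]
        _ = a*s*b*(t*a*s*a) := by simp only [mul_assoc]
        _ = a*s*a*(t*a*s*a) := by rw [(A1 s).symm]
        _ = a*s*a*t*a*s*a := by simp only [mul_assoc]
        _ = a*s*a*t*(a*s*a) := by simp only [mul_assoc]
    have f3 : c*s*a*t*(c*s*a) = a*s*a*t*(a*s*a) := by
      calc c*s*a*t*(c*s*a) = c*s*a*t*c*s*a := by simp only [mul_assoc]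
        _ = c*s*(a*(t*c*s)*a) := by simp only [mul_assoc]
        _ = c*s*(b*(t*c*s)*a) := by rw [AB (t*c*s)]
        _ = c*s*b*t*c*s*a := by simp only [mul_assoc]
        _ = c*s*b*(t*c*s*a) := by simp only [mul_assoc]
        _ = b*s*b*(t*c*s*a) := by rw [(BC s).symm]
        _ = b*s*b*t*c*s*a := by simp only [mul_assoc]
        _ = b*(s*b*t)*c*(s*a) := by simp only [mul_assoc]
        _ = b*(s*b*t)*b*(s*a) := by rw [(B1 (s*b*t)).symm]
        _ = b*s*b*t*b*s*a := by simp only [mul_assoc]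
        _ = b*s*b*t*(b*s*a) := by simp only [mul_assoc]
        _ = b*s*b*t*(a*s*a) := by rw [(AB s).symm]
        _ = b*s*b*t*a*s*a := by simp only [mul_assoc]
        _ = b*(s*b*t)*a*(s*a) := by simp only [mul_assoc]
        _ = a*(s*b*t)*a*(s*a) := by rw [(AB (s*b*t)).symm]
        _ = a*s*b*t*a*s*a := by simp only [mul_assoc]
        _ = a*s*b*(t*a*s*a) := by simp only [mul_assoc]
        _ = a*s*a*(t*a*s*a) := by rw [(A1 s).symm]
        _ = a*s*a*t*a*s*a := by simp only [mul_assoc]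
        _ = a*s*a*t*(a*s*a) := by simp only [mul_assoc]
    exact ⟨f1.symm, f1.trans f2.symm, f2.trans f3.symm⟩
  intro s
  exact ⟨key s, (key s).symm.trans (key2 s)⟩
end

section
/- The Conrad relation on M_n(F), for F a field, defined by A ρ B if and only if A·S·A = A·S·B and A·S·B = B·S·A for all S ∈ M_n(F), is a partial order (reflexive, antisymmetric, and transitive). -/
/-!
`M_n(F)` is a simple ring, hence prime: `a * x * b = 0` for all `x` forces `a = 0` or `b = 0`.
Since `a ρ b` gives `a * s * (a - b) = 0` for all `s`, it follows that `a ρ b` holds exactly when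
`a = 0` or `a = b`, and that relation is evidently a partial order.
-/

-- The zero ring is allowed, so that `M_0(F)` qualifies.
def IsPrimeRing (R : Type*) [Ring R] : Prop :=
  ∀ a b : R, (∀ x, a * x * b = 0) → a = 0 ∨ b = 0

/-- In a simple ring the elements `a` with `a * x * b = 0` for all `x` form a two-sided ideal,
which contains `1` as soon as it contains some `a ≠ 0`. -/
theorem IsSimpleRing.isPrimeRing (R : Type*) [Ring R] [IsSimpleRing R] : IsPrimeRing R := by
  intro a b h
  let I : TwoSidedIdeal R := .mk' {c | ∀ x, c * x * b = 0} (by simp)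
    (fun hc hd x => by simp [add_mul, hc x, hd x])
    (fun hc x => by simp [hc x])
    (fun {y c} hc x => by rw [mul_assoc y, mul_assoc y, hc x, mul_zero])
    (fun {c y} hc x => by simpa [mul_assoc] using hc (y * x))
  by_cases ha : a = 0
  · exact .inl ha
  · have h1 : (1 : R) ∈ I := one_mem_of_ne_zero_mem I ha ((TwoSidedIdeal.mem_mk' _ _ _ _ _ _ _).2 h)
    exact .inr (by simpa using (TwoSidedIdeal.mem_mk' _ _ _ _ _ _ _).1 h1 1)

theorem Matrix.isPrimeRing (ι A : Type*) [Fintype ι] [DecidableEq ι] [Ring A] [IsSimpleRing A] :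
    IsPrimeRing (Matrix ι ι A) := by
  cases isEmpty_or_nonempty ι
  · exact fun a _ _ => .inl (Subsingleton.elim a 0)
  · exact IsSimpleRing.isPrimeRing _

def ConradRel {R : Type*} [Mul R] (a b : R) : Prop :=
  ∀ s, a * s * a = a * s * b ∧ a * s * b = b * s * a

theorem conradRel_refl {R : Type*} [Mul R] (a : R) : ConradRel a a := fun _ => ⟨rfl, rfl⟩

section ConradRel

variable {R : Type*} [Ring R]

theorem conradRel_iff (hR : IsPrimeRing R) {a b : R} : ConradRel a b ↔ a = 0 ∨ a = b := by
  constructor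
  · intro h
    have hab : ∀ s, a * s * (a - b) = 0 := fun s => by rw [mul_sub, (h s).1, sub_self]
    exact (hR a (a - b) hab).imp_right sub_eq_zero.mp
  · rintro (rfl | rfl) s <;> simp

theorem ConradRel.antisymm (hR : IsPrimeRing R) {a b : R} (hab : ConradRel a b)
    (hba : ConradRel b a) : a = b := by
  rcases (conradRel_iff hR).1 hab with rfl | rfl
  · rcases (conradRel_iff hR).1 hba with rfl | h
    exacts [rfl, h.symm]
  · rfl

theorem ConradRel.trans (hR : IsPrimeRing R) {a b c : R} (hab : ConradRel a b)
    (hbc : ConradRel b c) : ConradRel a c := by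
  rcases (conradRel_iff hR).1 hab with rfl | rfl
  exacts [(conradRel_iff hR).2 (.inl rfl), hbc]

end ConradRel

/-- The Conrad relation on `M_n(F)` is a partial order. -/
theorem conrad_matrix_partialOrder {F : Type*} [Field F] (n : ℕ) :
    Reflexive (fun A B : Matrix (Fin n) (Fin n) F =>
      ∀ S : Matrix (Fin n) (Fin n) F, A * S * A = A * S * B ∧ A * S * B = B * S * A) ∧
    AntiSymmetric (fun A B : Matrix (Fin n) (Fin n) F =>
      ∀ S : Matrix (Fin n) (Fin n) F, A * S * A = A * S * B ∧ A * S * B = B * S * A) ∧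
    Transitive (fun A B : Matrix (Fin n) (Fin n) F =>
      ∀ S : Matrix (Fin n) (Fin n) F, A * S * A = A * S * B ∧ A * S * B = B * S * A) := by
  have hR := Matrix.isPrimeRing (Fin n) F
  exact ⟨conradRel_refl, fun _ _ => ConradRel.antisymm hR, fun _ _ _ => ConradRel.trans hR⟩
end

section
/- The Conrad relation on M_n(F), for F a field, is compatible with matrix multiplication: if A ρ B and C ρ D, then (A·C) ρ (B·D), where A ρ B means A·S·A = A·S·B = B·S·A for all S ∈ M_n(F). -/
/-- The Conrad relation on `M_n(F)` is compatible with matrix multiplication. -/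
theorem conrad_matrix_compatible {F : Type*} [Field F] (n : ℕ)
    (A B C D : Matrix (Fin n) (Fin n) F)
    (hAB : ∀ S : Matrix (Fin n) (Fin n) F,
      A * S * A = A * S * B ∧ A * S * B = B * S * A)
    (hCD : ∀ S : Matrix (Fin n) (Fin n) F,
      C * S * C = C * S * D ∧ C * S * D = D * S * C) :
    ∀ S : Matrix (Fin n) (Fin n) F,
      (A * C) * S * (A * C) = (A * C) * S * (B * D) ∧
      (A * C) * S * (B * D) = (B * D) * S * (A * C) := by
  intro S
  have h1 := (hCD (S * A)).1
  have h2 := (hAB (C * S)).1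
  have h3 := (hAB (C * S)).2
  have h4 := (hCD (S * A)).2
  constructor
  · calc A * C * S * (A * C) = A * (C * (S * A) * C) := by simp only [mul_assoc]
      _ = A * (C * (S * A) * D) := by rw [h1]
      _ = A * (C * S) * A * D := by simp only [mul_assoc]
      _ = A * (C * S) * B * D := by rw [h2]
      _ = A * C * S * (B * D) := by simp only [mul_assoc]
  · calc A * C * S * (B * D) = A * (C * S) * B * D := by simp only [mul_assoc]
      _ = B * (C * S) * A * D := by rw [h3]
      _ = B * (C * (S * A) * D) := by simp only [mul_assoc]
      _ = B * (D * (S * A) * C) := by rw [h4]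
      _ = B * D * S * (A * C) := by simp only [mul_assoc]
end
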